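/- arXiv:1402.0133 — 2 statements merged into one kernel-verified Lean document; each statement's English description precedes it below -/
import Mathlib

section
/- For all x in [0,1], ∫₀¹ ln(1+xy)/(1+y) dy = Li₂((1-x)/2) - Li₂(-x) + (ln 2)²/2 - π²/12. -/
/-!
Write `log (1 + x y) / (1 + y) = ∫₀ˣ y / ((1 + t y) (1 + y)) dt` and exchange the integrals:
the inner integral over `y ∈ [0, 1]` is `log ((1 + t) / 2) / (1 - t) + log (1 + t) / t`. Since
`Li₂' z = -log (1 - z) / z`, this is the derivative of `Li₂ ((1 - t) / 2) - Li₂ (-t)`, so the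
integral equals `Li₂ ((1 - x) / 2) - Li₂ (-x) - Li₂ (1 / 2)`. At `x = 1` the integral is
`(log 2)² / 2` and `-Li₂ (-1) = ζ(2) / 2`, which evaluates `Li₂ (1 / 2)`.
-/

/-- The dilogarithm Li₂(z) = ∑_{n=1}^∞ zⁿ/n². -/
noncomputable def Li2 (z : ℝ) : ℝ := ∑' n : ℕ, z ^ (n + 1) / ((n : ℝ) + 1) ^ 2

open Real Set intervalIntegral MeasureTheory

lemma hasSum_one_div_nat_add_one_sq :
    HasSum (fun n : ℕ => 1 / ((n : ℝ) + 1) ^ 2) (π ^ 2 / 6) := by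
  simpa using (hasSum_nat_add_iff' 1).mpr hasSum_zeta_two

lemma Li2_zero : Li2 0 = 0 := by
  simp [Li2]

lemma Li2_neg_one : Li2 (-1) = -(π ^ 2 / 12) := by
  -- `(-1) ^ (n + 1) + 1` vanishes for even `n` and is `2` for odd `n`
  have hodd : HasSum (fun n : ℕ => ((-1 : ℝ) ^ (n + 1) + 1) / ((n : ℝ) + 1) ^ 2)
      (0 + 1 / 2 * (π ^ 2 / 6)) := by
    refine HasSum.even_add_odd ?_ ?_
    · simp [pow_succ, pow_mul, hasSum_zero]
    · refine (hasSum_one_div_nat_add_one_sq.mul_left (1 / 2)).congr_fun fun k => ?_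
      rw [pow_succ, pow_succ, pow_mul]
      push_cast
      field_simp
      ring
  rw [Li2, ((hodd.sub hasSum_one_div_nat_add_one_sq).congr_fun fun n => by ring).tsum_eq]
  ring

lemma continuousOn_Li2 : ContinuousOn Li2 (Icc (-1) 1) := by
  refine continuousOn_tsum (fun n => by fun_prop) hasSum_one_div_nat_add_one_sq.summable
    fun n z hz => ?_
  rw [norm_div, norm_pow, Real.norm_eq_abs, norm_of_nonneg (by positivity)]
  gcongr
  exact pow_le_one₀ (abs_nonneg z) (abs_le.mpr hz)

lemma hasSum_pow_div_nat_add_one {z : ℝ} (hz : |z| < 1) (hz0 : z ≠ 0) :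
    HasSum (fun n : ℕ => z ^ n / (n + 1)) (-log (1 - z) / z) := by
  refine ((hasSum_pow_div_log_of_abs_lt_one hz).div_const z).congr_fun fun n => ?_
  rw [pow_succ]
  field_simp

lemma hasDerivAt_Li2 {z : ℝ} (hz : |z| < 1) (hz0 : z ≠ 0) :
    HasDerivAt Li2 (-log (1 - z) / z) z := by
  obtain ⟨r, hzr, hr1⟩ := exists_between hz
  have hr0 : 0 < r := (abs_nonneg z).trans_lt hzr
  rw [← (hasSum_pow_div_nat_add_one hz hz0).tsum_eq]
  unfold Li2
  refine hasDerivAt_tsum_of_isPreconnected (t := Metric.ball (0 : ℝ) r)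
    (g := fun (n : ℕ) (y : ℝ) => y ^ (n + 1) / ((n : ℝ) + 1) ^ 2)
    (g' := fun n y => y ^ n / (n + 1))
    (summable_geometric_of_lt_one hr0.le hr1) Metric.isOpen_ball
    (convex_ball 0 r).isPreconnected (fun n y _ => ?_) (fun n y hy => ?_)
    (Metric.mem_ball_self hr0) ?_ (by simpa using hzr)
  · refine ((hasDerivAt_pow (n + 1) y).div_const (((n : ℝ) + 1) ^ 2)).congr_deriv ?_
    push_cast
    field_simp
  · rw [mem_ball_zero_iff, Real.norm_eq_abs] at hy
    rw [norm_div, norm_pow, Real.norm_eq_abs, norm_of_nonneg (by positivity)]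
    calc |y| ^ n / ((n : ℝ) + 1) ≤ |y| ^ n := div_le_self (by positivity) (by simp)
      _ ≤ r ^ n := by gcongr
  · simp

lemma hasDerivAt_Li2_one_sub_div_two_sub_Li2_neg {x : ℝ} (hx : x ∈ Ioo 0 1) :
    HasDerivAt (fun x => Li2 ((1 - x) / 2) - Li2 (-x))
      (log ((1 + x) / 2) / (1 - x) + log (1 + x) / x) x := by
  obtain ⟨hx0, hx1⟩ := hx
  have h₁ := (hasDerivAt_Li2 (z := (1 - x) / 2) (by rw [abs_lt]; constructor <;> linarith)
    (by linarith)).comp x (((hasDerivAt_id x).const_sub 1).div_const 2)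
  have h₂ := (hasDerivAt_Li2 (z := -x) (by rw [abs_lt]; constructor <;> linarith)
    (by linarith)).comp x (hasDerivAt_neg x)
  refine (h₁.sub h₂).congr_deriv ?_
  rw [show 1 - (1 - x) / 2 = (1 + x) / 2 by ring, sub_neg_eq_add]
  field_simp
  ring

lemma continuousOn_Li2_one_sub_div_two_sub_Li2_neg :
    ContinuousOn (fun x => Li2 ((1 - x) / 2) - Li2 (-x)) (Icc 0 1) := by
  refine (continuousOn_Li2.comp (by fun_prop) fun x hx => ?_).sub
    (continuousOn_Li2.comp (by fun_prop) fun x hx => ?_) <;>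
  · obtain ⟨hx0, hx1⟩ := hx
    constructor <;> linarith

lemma one_add_mul_pos {t y : ℝ} (ht : -1 < t) (hy : y ∈ Icc (0 : ℝ) 1) : 0 < 1 + t * y := by
  obtain ⟨hy0, hy1⟩ := hy
  obtain hy1 | rfl := hy1.lt_or_eq
  · nlinarith
  · linarith

lemma integral_div_one_add_mul_mul_one_add {t : ℝ} (ht : -1 < t) (ht0 : t ≠ 0) (ht1 : t ≠ 1) :
    ∫ y in (0 : ℝ)..1, y / ((1 + t * y) * (1 + y)) =
      log ((1 + t) / 2) / (1 - t) + log (1 + t) / t := by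
  have ht1' : 1 - t ≠ 0 := sub_ne_zero.mpr ht1.symm
  have hderiv : ∀ y ∈ uIcc (0 : ℝ) 1, HasDerivAt
      (fun y => (log (1 + t * y) / t - log (1 + y)) / (1 - t))
      (y / ((1 + t * y) * (1 + y))) y := by
    intro y hy
    rw [uIcc_of_le zero_le_one] at hy
    have hty := one_add_mul_pos ht hy
    have h₁ := ((((hasDerivAt_id' y).const_mul t).const_add 1).log hty.ne').div_const t
    have h₂ := ((hasDerivAt_id' y).const_add 1).log (by linarith [hy.1])
    refine ((h₁.sub h₂).div_const (1 - t)).congr_deriv ?_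
    have : 1 + y ≠ 0 := by linarith [hy.1]
    field_simp
    ring
  have hcont : ContinuousOn (fun y => y / ((1 + t * y) * (1 + y))) (uIcc 0 1) := by
    refine ContinuousOn.div (by fun_prop) (by fun_prop) fun y hy => ?_
    rw [uIcc_of_le zero_le_one] at hy
    exact (mul_pos (one_add_mul_pos ht hy) (by linarith [hy.1])).ne'
  rw [integral_eq_sub_of_hasDerivAt hderiv hcont.intervalIntegrable,
    log_div (by linarith) two_ne_zero]
  norm_num
  field_simp
  ring

lemma integrableOn_uIoc_prod_div_one_add_mul_mul_one_add {x : ℝ} (hx : -1 < x) :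
    IntegrableOn (Function.uncurry fun t y : ℝ => y / ((1 + t * y) * (1 + y)))
      (uIoc 0 x ×ˢ uIoc 0 1) := by
  refine (ContinuousOn.integrableOn_compact (isCompact_uIcc.prod isCompact_uIcc) ?_).mono_set
    (prod_mono uIoc_subset_uIcc uIoc_subset_uIcc)
  refine ContinuousOn.div (by fun_prop) (by fun_prop) fun ⟨t, y⟩ ⟨ht, hy⟩ => ?_
  rw [uIcc_of_le zero_le_one] at hy
  have ht : -1 < t := (lt_min (by norm_num) hx).trans_le ht.1
  exact (mul_pos (one_add_mul_pos ht hy) (by linarith [hy.1])).ne'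

lemma intervalIntegrable_integral_div_one_add_mul_mul_one_add {x : ℝ} (hx : -1 < x) :
    IntervalIntegrable (fun t => ∫ y in (0 : ℝ)..1, y / ((1 + t * y) * (1 + y)))
      volume 0 x := by
  have h := integrableOn_uIoc_prod_div_one_add_mul_mul_one_add hx
  rw [IntegrableOn, Measure.volume_eq_prod, ← Measure.prod_restrict] at h
  rw [intervalIntegrable_iff, IntegrableOn]
  simpa [intervalIntegral.integral_of_le zero_le_one, uIoc_of_le zero_le_one]
    using h.integral_prod_left

lemma integral_log_one_add_mul_div_one_add_eq_integral_integral {x : ℝ} (hx : -1 < x) :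
    ∫ y in (0 : ℝ)..1, log (1 + x * y) / (1 + y) =
      ∫ t in (0 : ℝ)..x, ∫ y in (0 : ℝ)..1, y / ((1 + t * y) * (1 + y)) := by
  rw [intervalIntegral_intervalIntegral_swap
    (integrableOn_uIoc_prod_div_one_add_mul_mul_one_add hx)]
  refine integral_congr fun y hy => ?_
  rw [uIcc_of_le zero_le_one] at hy
  have hpos : ∀ t ∈ uIcc 0 x, 0 < 1 + t * y := fun t ht =>
    one_add_mul_pos ((lt_min (by norm_num) hx).trans_le ht.1) hy
  have hderiv : ∀ t ∈ uIcc 0 x, HasDerivAt (fun t => log (1 + t * y) / (1 + y))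
      (y / ((1 + t * y) * (1 + y))) t := by
    intro t ht
    refine ((((hasDerivAt_id' t).mul_const y).const_add 1).log (hpos t ht).ne'
      |>.div_const (1 + y)).congr_deriv ?_
    field_simp
  have hcont : ContinuousOn (fun t => y / ((1 + t * y) * (1 + y))) (uIcc 0 x) :=
    ContinuousOn.div (by fun_prop) (by fun_prop) fun t ht =>
      (mul_pos (hpos t ht) (by linarith [hy.1])).ne'
  simp [integral_eq_sub_of_hasDerivAt hderiv hcont.intervalIntegrable]

lemma integral_log_one_add_div_one_add {a : ℝ} (ha : 0 ≤ a) :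
    ∫ y in (0 : ℝ)..a, log (1 + y) / (1 + y) = log (1 + a) ^ 2 / 2 := by
  have hderiv : ∀ y ∈ uIcc (0 : ℝ) a, HasDerivAt (fun y => log (1 + y) ^ 2 / 2)
      (log (1 + y) / (1 + y)) y := by
    intro y hy
    rw [uIcc_of_le ha] at hy
    refine ((((hasDerivAt_id' y).const_add 1).log (by linarith [hy.1])).pow 2
      |>.div_const 2).congr_deriv ?_
    norm_num
    field_simp
  have hcont : ContinuousOn (fun y => log (1 + y) / (1 + y)) (uIcc 0 a) := by
    refine ContinuousOn.div ?_ (by fun_prop) fun y hy => ?_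
    · refine ContinuousOn.log (by fun_prop) fun y hy => ?_
      rw [uIcc_of_le ha] at hy
      linarith [hy.1]
    · rw [uIcc_of_le ha] at hy
      linarith [hy.1]
  rw [integral_eq_sub_of_hasDerivAt hderiv hcont.intervalIntegrable]
  simp

lemma integral_log_one_add_mul_div_one_add {x : ℝ} (hx : x ∈ Icc (0 : ℝ) 1) :
    ∫ y in (0 : ℝ)..1, log (1 + x * y) / (1 + y) =
      Li2 ((1 - x) / 2) - Li2 (-x) - Li2 (1 / 2) := by
  obtain ⟨hx0, hx1⟩ := hx
  rw [integral_log_one_add_mul_div_one_add_eq_integral_integral (by linarith),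
    integral_eq_sub_of_hasDerivAt_of_le hx0
      (continuousOn_Li2_one_sub_div_two_sub_Li2_neg.mono (Icc_subset_Icc_right hx1))
      (fun t ht => ?_) (intervalIntegrable_integral_div_one_add_mul_mul_one_add (by linarith))]
  · norm_num [Li2_zero]
  have ht' : t ∈ Ioo 0 1 := ⟨ht.1, ht.2.trans_le hx1⟩
  rw [integral_div_one_add_mul_mul_one_add (by linarith [ht.1]) ht'.1.ne' ht'.2.ne]
  exact hasDerivAt_Li2_one_sub_div_two_sub_Li2_neg ht'

lemma Li2_one_half : Li2 (1 / 2) = π ^ 2 / 12 - log 2 ^ 2 / 2 := by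
  have h := integral_log_one_add_mul_div_one_add (x := 1) ⟨zero_le_one, le_rfl⟩
  simp only [one_mul, integral_log_one_add_div_one_add zero_le_one] at h
  norm_num [Li2_zero, Li2_neg_one] at h
  linarith

theorem stmt_6 (x : ℝ) (hx : x ∈ Set.Icc (0:ℝ) 1) :
    (∫ y in (0:ℝ)..1, Real.log (1 + x * y) / (1 + y))
      = Li2 ((1 - x) / 2) - Li2 (-x) + (Real.log 2) ^ 2 / 2 - Real.pi ^ 2 / 12 := by
  rw [integral_log_one_add_mul_div_one_add hx, Li2_one_half]
  ring
end

section
/- For |x| < 1, ∫₀¹ ln(1+xy)/(1+y) dy = ln 2 · ln(1-x) + ∑_{n=1}^∞ (xⁿ/n) H_n⁻, where H_n⁻ = ∑_{k=1}^n (-1)^(k-1)/k. -/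
/-!
Expand `log (1 + x y) = ∑ (-1)ⁿ (x y)ⁿ⁺¹ / (n + 1)` and integrate termwise, the terms being
dominated by `|x|ⁿ⁺¹` on `[0, 1]`. The moments satisfy `∫₀¹ yᵐ/(1+y) = (-1)ᵐ (log 2 - H_m⁻)`,
by induction from `yᵐ⁺¹/(1+y) = yᵐ - yᵐ/(1+y)`; their `log 2` parts sum to `log 2 · log (1 - x)`.
-/

/-- The n-th skew-harmonic number H_n⁻ = ∑_{k=1}^n (-1)^(k-1)/k. -/
noncomputable def skewHarmonic (n : ℕ) : ℝ := ∑ k ∈ Finset.range n, (-1 : ℝ) ^ k / (k + 1)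

open Real intervalIntegral

lemma neg_one_pow_mul_neg_one_pow {R : Type*} [Monoid R] [HasDistribNeg R] (n : ℕ) :
    (-1 : R) ^ n * (-1) ^ n = 1 := by
  rw [← pow_add, ← two_mul, pow_mul, neg_one_sq, one_pow]

lemma skewHarmonic_succ (n : ℕ) :
    skewHarmonic (n + 1) = skewHarmonic n + (-1) ^ n / (n + 1) :=
  Finset.sum_range_succ _ n

lemma integral_inv_one_add : ∫ y in (0:ℝ)..1, (1 + y)⁻¹ = log 2 := by
  rw [integral_comp_add_left (fun y => y⁻¹), integral_inv (by norm_num)]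
  norm_num

lemma intervalIntegrable_pow_div_one_add (n : ℕ) :
    IntervalIntegrable (fun y : ℝ => y ^ n / (1 + y)) MeasureTheory.volume 0 1 := by
  refine ((continuous_pow n).continuousOn.div (by fun_prop) fun y hy => ?_).intervalIntegrable
  rw [Set.uIcc_of_le zero_le_one] at hy
  linarith [hy.1]

lemma integral_pow_div_one_add (n : ℕ) :
    ∫ y in (0:ℝ)..1, y ^ n / (1 + y) = (-1) ^ n * (log 2 - skewHarmonic n) := by
  induction n with
  | zero => simpa [skewHarmonic] using integral_inv_one_add
  | succ n ih =>
    have hsplit : ∀ y ∈ Set.uIcc (0:ℝ) 1, y ^ (n + 1) / (1 + y) = y ^ n - y ^ n / (1 + y) := by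
      intro y hy
      rw [Set.uIcc_of_le zero_le_one] at hy
      have : 1 + y ≠ 0 := by linarith [hy.1]
      field_simp
      ring
    rw [integral_congr hsplit, integral_sub (intervalIntegrable_pow n)
      (intervalIntegrable_pow_div_one_add n), integral_pow, ih, skewHarmonic_succ]
    linear_combination (-1 / (n + 1 : ℝ)) * neg_one_pow_mul_neg_one_pow (R := ℝ) n

lemma hasSum_log_one_add_of_abs_lt_one {z : ℝ} (hz : |z| < 1) :
    HasSum (fun n : ℕ => (-1) ^ n * z ^ (n + 1) / (n + 1)) (log (1 + z)) := by
  have h := (hasSum_pow_div_log_of_abs_lt_one (x := -z) (by rwa [abs_neg])).neg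
  rw [neg_neg, sub_neg_eq_add] at h
  have hterm : (fun n : ℕ => (-1) ^ n * z ^ (n + 1) / (n + 1))
      = fun n : ℕ => -((-z) ^ (n + 1) / (n + 1)) := by
    funext n
    rw [neg_pow z, pow_succ (-1 : ℝ)]
    ring
  rwa [hterm]

lemma abs_pow_div_one_add_le_one {y : ℝ} (hy : y ∈ Set.Icc (0:ℝ) 1) (n : ℕ) :
    |y ^ n / (1 + y)| ≤ 1 := by
  have hpos : 0 < 1 + y := by linarith [hy.1]
  rw [abs_of_nonneg (div_nonneg (pow_nonneg hy.1 n) hpos.le), div_le_one hpos]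
  linarith [pow_le_one₀ (n := n) hy.1 hy.2, hy.1]

lemma abs_pow_succ_div_le (x : ℝ) (n : ℕ) : |x ^ (n + 1) / (n + 1)| ≤ |x| ^ (n + 1) := by
  rw [abs_div, abs_pow, abs_of_pos (by positivity : (0:ℝ) < n + 1)]
  exact div_le_self (by positivity) (by simp)

lemma integral_neg_one_pow_mul_pow_div_one_add (x : ℝ) (n : ℕ) :
    ∫ y in (0:ℝ)..1, (-1) ^ n * x ^ (n + 1) / (n + 1) * (y ^ (n + 1) / (1 + y))
      = x ^ (n + 1) / (n + 1) * (skewHarmonic (n + 1) - log 2) := by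
  rw [integral_const_mul, integral_pow_div_one_add, pow_succ (-1 : ℝ)]
  linear_combination (x ^ (n + 1) / (n + 1) * (skewHarmonic (n + 1) - log 2)) *
    neg_one_pow_mul_neg_one_pow (R := ℝ) n

lemma hasSum_integral_log_one_add_mul_div {x : ℝ} (hx : |x| < 1) :
    HasSum (fun n : ℕ => x ^ (n + 1) / (n + 1) * (skewHarmonic (n + 1) - log 2))
      (∫ y in (0:ℝ)..1, log (1 + x * y) / (1 + y)) := by
  simp_rw [← integral_neg_one_pow_mul_pow_div_one_add]
  refine hasSum_integral_of_dominated_convergence (fun n _ => |x| ^ (n + 1)) (fun n => ?_)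
    (fun n => ?_) ?_ intervalIntegrable_const ?_
  · exact ((intervalIntegrable_pow_div_one_add (n + 1)).const_mul _).def'.aestronglyMeasurable
  · refine Filter.Eventually.of_forall fun y hy => ?_
    rw [Set.uIoc_of_le zero_le_one] at hy
    rw [Real.norm_eq_abs, mul_div_assoc, abs_mul, abs_mul, abs_pow, abs_neg, abs_one, one_pow,
      one_mul]
    calc |x ^ (n + 1) / (n + 1)| * |y ^ (n + 1) / (1 + y)| ≤ |x ^ (n + 1) / (n + 1)| :=
          mul_le_of_le_one_right (abs_nonneg _)
            (abs_pow_div_one_add_le_one (Set.Ioc_subset_Icc_self hy) _)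
      _ ≤ |x| ^ (n + 1) := abs_pow_succ_div_le x n
  · exact Filter.Eventually.of_forall fun y _ =>
      (summable_geometric_of_lt_one (abs_nonneg x) hx).comp_injective (add_left_injective 1)
  · refine Filter.Eventually.of_forall fun y hy => ?_
    rw [Set.uIoc_of_le zero_le_one] at hy
    have hxy : |x * y| < 1 := by
      rw [abs_mul, abs_of_pos hy.1]
      nlinarith [abs_nonneg x, hy.2]
    refine ((hasSum_log_one_add_of_abs_lt_one hxy).div_const (1 + y)).congr_fun fun n => ?_
    rw [mul_pow]
    ring

theorem stmt_7 (x : ℝ) (hx : |x| < 1) :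
    (∫ y in (0:ℝ)..1, Real.log (1 + x * y) / (1 + y))
      = Real.log 2 * Real.log (1 - x)
        + ∑' n : ℕ, x ^ (n + 1) / ((n : ℝ) + 1) * skewHarmonic (n + 1) := by
  have hlog2 := (hasSum_pow_div_log_of_abs_lt_one hx).mul_right (log 2)
  have h := (hasSum_integral_log_one_add_mul_div hx).add hlog2
  simp only [← mul_add, sub_add_cancel] at h
  rw [h.tsum_eq]
  ring
end
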